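/- arXiv:1003.1565 — 3 statements merged into one kernel-verified Lean document; each statement's English description precedes it below -/
import Mathlib

section
/- Let * be a star operation on an integral domain R with quotient field K. Define A^{~*} = { x ∈ K : xJ ⊆ A for some nonzero finitely generated ideal J ⊆ R with J^* = R }. Then ~* is a stable star operation of finite character on R, i.e., (A ∩ B)^{~*} = A^{~*} ∩ B^{~*} for all nonzero fractional ideals A, B, and ~* equals its associated finite-character operation. -/
open FractionalIdeal

noncomputable section

variable (R : Type*) [CommRing R] [IsDomain R]

/-- A star operation on an integral domain `R`. -/
structure StarOperation where
  toFun : FractionalIdeal (nonZeroDivisors R) (FractionRing R) →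
    FractionalIdeal (nonZeroDivisors R) (FractionRing R)
  star_principal : ∀ x : FractionRing R, x ≠ 0 →
    toFun (spanSingleton (nonZeroDivisors R) x) = spanSingleton (nonZeroDivisors R) x
  star_smul : ∀ (x : FractionRing R) (A : FractionalIdeal (nonZeroDivisors R) (FractionRing R)),
    x ≠ 0 → A ≠ 0 →
    toFun (spanSingleton (nonZeroDivisors R) x * A) = spanSingleton (nonZeroDivisors R) x * toFun A
  le_star : ∀ A : FractionalIdeal (nonZeroDivisors R) (FractionRing R), A ≠ 0 → A ≤ toFun A
  star_mono : ∀ A B : FractionalIdeal (nonZeroDivisors R) (FractionRing R),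
    A ≠ 0 → A ≤ B → toFun A ≤ toFun B
  star_idem : ∀ A : FractionalIdeal (nonZeroDivisors R) (FractionRing R),
    A ≠ 0 → toFun (toFun A) = toFun A

/-- The set `A^{~*} = {x ∈ K | xJ ⊆ A for some nonzero f.g. ideal J ⊆ R with J^* = R}`. -/
def tildeSet (s : StarOperation R)
    (A : FractionalIdeal (nonZeroDivisors R) (FractionRing R)) : Set (FractionRing R) :=
  {x | ∃ J : Ideal R, J ≠ ⊥ ∧ J.FG ∧
    s.toFun (J : FractionalIdeal (nonZeroDivisors R) (FractionRing R)) = 1 ∧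
    ∀ j ∈ J, x * algebraMap R (FractionRing R) j ∈ (A : Set (FractionRing R))}

/-!
The nonzero finitely generated ideals `J` with `J^* = R` are closed under products, and
`J₁J₂ ⊆ J₁ ∩ J₂`, so they form a downward directed family. Writing the defining condition
`xJ ⊆ A` as `J ⊆ (A :_R x)`, directedness makes `A^{~*}` a submodule and gives stability.
Finite generation lets the witnesses of finitely many elements be merged, which gives
idempotence, and `x ∈ (xJ)^{~*}` with `xJ` finitely generated gives finite character.
Finally `A^{~*} ⊆ A^*`, since `xJ ⊆ A` forces `x ∈ x J^* = (xJ)^* ⊆ A^*`.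
-/

open scoped nonZeroDivisors

namespace FractionalIdeal

variable {R₁ : Type*} [CommRing R₁] {S : Submonoid R₁}

section

variable {P : Type*} [CommRing P] [Algebra R₁ P]

instance [NoZeroDivisors P] : NoZeroDivisors (FractionalIdeal S P) where
  eq_zero_or_eq_zero_of_mul_eq_zero h := by
    simpa [← coeToSubmodule_inj, Submodule.mul_eq_bot] using h

variable [IsLocalization S P]

theorem spanSingleton_mul_coeIdeal_le_iff {I : FractionalIdeal S P} {x : P} {J : Ideal R₁} :
    spanSingleton S x * J ≤ I ↔ J ≤ (I : Submodule R₁ P).colon {x} := by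
  rw [mul_le]
  constructor
  · intro h j hj
    rw [Submodule.mem_colon_singleton, mem_coe, Algebra.smul_def, mul_comm]
    exact h x (mem_spanSingleton_self S x) _ ((mem_coeIdeal _).2 ⟨j, hj, rfl⟩)
  · intro h _ hu _ hv
    obtain ⟨r, rfl⟩ := (mem_spanSingleton _).1 hu
    obtain ⟨j, hj, rfl⟩ := (mem_coeIdeal _).1 hv
    have hjx := (Submodule.mem_colon_singleton.1 (h hj))
    rw [Algebra.smul_def, mul_comm] at hjx
    simpa [smul_mul_assoc] using I.1.smul_mem r hjx

end

variable {K : Type*} [Field K] [Algebra R₁ K] [IsLocalization S K]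

theorem mem_spanSingleton_mul_iff {I : FractionalIdeal S K} {y z : K} (hy : y ≠ 0) :
    z ∈ spanSingleton S y * I ↔ y⁻¹ * z ∈ I := by
  rw [mem_singleton_mul]
  refine ⟨?_, fun h => ⟨_, h, (mul_inv_cancel_left₀ hy z).symm⟩⟩
  rintro ⟨a, ha, rfl⟩
  rwa [inv_mul_cancel_left₀ hy]

theorem colon_spanSingleton_mul {I : FractionalIdeal S K} {y z : K} (hy : y ≠ 0) :
    ((spanSingleton S y * I : FractionalIdeal S K) : Submodule R₁ K).colon {z} =
      (I : Submodule R₁ K).colon {y⁻¹ * z} := by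
  ext r
  simp only [Submodule.mem_colon_singleton, mem_coe, mem_spanSingleton_mul_iff hy,
    mul_smul_comm]

end FractionalIdeal

namespace StarOperation

variable {R} (s : StarOperation R) {A B : FractionalIdeal R⁰ (FractionRing R)}
  {x : FractionRing R}

theorem toFun_one : s.toFun 1 = 1 := by
  simpa using s.star_principal 1 one_ne_zero

theorem toFun_mul_le (hA : A ≠ 0) (B : FractionalIdeal R⁰ (FractionRing R)) :
    s.toFun A * B ≤ s.toFun (A * B) := by
  refine mul_le.2 fun a ha b hb => ?_
  rcases eq_or_ne b 0 with rfl | hb0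
  · rw [mul_zero]
    exact FractionalIdeal.zero_mem _
  have hbA : spanSingleton R⁰ b * A ≤ A * B := by
    rw [mul_comm A]
    gcongr
    exact spanSingleton_le_iff_mem.2 hb
  have h := s.star_mono _ _ (mul_ne_zero (spanSingleton_ne_zero_iff.2 hb0) hA) hbA
  rw [s.star_smul b A hb0 hA] at h
  exact h (mem_singleton_mul.2 ⟨a, ha, mul_comm a b⟩)

/-- For `s = v` these are the Glaz–Vasconcelos ideals. -/
structure IsGVIdeal (J : Ideal R) : Prop where
  ne_bot : J ≠ ⊥
  fg : J.FG
  toFun_eq_one : s.toFun J = 1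

theorem isGVIdeal_top : s.IsGVIdeal ⊤ :=
  ⟨top_ne_bot, ⟨{1}, by simp⟩, by rw [coeIdeal_top, toFun_one]⟩

variable {s}

theorem IsGVIdeal.mul {I J : Ideal R} (hI : s.IsGVIdeal I) (hJ : s.IsGVIdeal J) :
    s.IsGVIdeal (I * J) := by
  refine ⟨by simp [hI.ne_bot, hJ.ne_bot], hI.fg.mul hJ.fg, ?_⟩
  have hI0 : (I : FractionalIdeal R⁰ (FractionRing R)) ≠ 0 := coeIdeal_ne_zero.2 hI.ne_bot
  have hJ0 : (J : FractionalIdeal R⁰ (FractionRing R)) ≠ 0 := coeIdeal_ne_zero.2 hJ.ne_bot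
  have hIJ0 := mul_ne_zero hI0 hJ0
  rw [coeIdeal_mul]
  refine le_antisymm ?_ ?_
  · calc s.toFun (I * J) ≤ s.toFun 1 :=
          s.star_mono _ _ hIJ0 (by rw [← coeIdeal_mul]; exact coeIdeal_le_one)
      _ = 1 := s.toFun_one
  · have hJ_le : (J : FractionalIdeal R⁰ (FractionRing R)) ≤ s.toFun (I * J) := by
      simpa [hI.toFun_eq_one] using s.toFun_mul_le hI0 J
    calc 1 = s.toFun J := hJ.toFun_eq_one.symm
      _ ≤ s.toFun (s.toFun (I * J)) := s.star_mono _ _ hJ0 hJ_le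
      _ = s.toFun (I * J) := s.star_idem _ hIJ0

theorem exists_isGVIdeal_le_colon_of_finite {S : Set (FractionRing R)} (hS : S.Finite)
    (h : ∀ x ∈ S, ∃ J, s.IsGVIdeal J ∧ J ≤ (A : Submodule R (FractionRing R)).colon {x}) :
    ∃ J, s.IsGVIdeal J ∧ J ≤ (A : Submodule R (FractionRing R)).colon S := by
  induction S, hS using Set.Finite.induction_on with
  | empty => exact ⟨⊤, s.isGVIdeal_top, by simp⟩
  | @insert x S _ _ ih =>
    obtain ⟨I, hI, hIx⟩ := h x (Set.mem_insert x S)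
    obtain ⟨J, hJ, hJS⟩ := ih fun y hy => h y (Set.mem_insert_of_mem x hy)
    refine ⟨I * J, hI.mul hJ, ?_⟩
    rw [Set.insert_eq, Submodule.colon_union]
    exact Ideal.mul_le_inf.trans (inf_le_inf hIx hJS)

omit [IsDomain R] in
theorem mem_tildeSet : x ∈ tildeSet R s A ↔
    ∃ J, s.IsGVIdeal J ∧ J ≤ (A : Submodule R (FractionRing R)).colon {x} := by
  simp only [tildeSet, Set.mem_ofPred_eq, SetLike.le_def, Submodule.mem_colon_singleton,
    Algebra.smul_def, mul_comm (algebraMap R _ _), SetLike.mem_coe, mem_coe]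
  exact ⟨fun ⟨J, h0, hfg, h1, hJ⟩ => ⟨J, ⟨h0, hfg, h1⟩, hJ⟩,
    fun ⟨J, ⟨h0, hfg, h1⟩, hJ⟩ => ⟨J, h0, hfg, h1, hJ⟩⟩

variable (s)

def tildeSubmodule (A : FractionalIdeal R⁰ (FractionRing R)) :
    Submodule R (FractionRing R) where
  carrier := tildeSet R s A
  zero_mem' := mem_tildeSet.2 ⟨⊤, s.isGVIdeal_top, by simp⟩
  add_mem' {x y} hx hy := by
    obtain ⟨J, hJ, hJxy⟩ := exists_isGVIdeal_le_colon_of_finite (Set.toFinite {x, y}) <| by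
      simpa [or_imp, forall_and, ← mem_tildeSet] using And.intro hx hy
    refine mem_tildeSet.2 ⟨J, hJ, fun r hr => ?_⟩
    have hxy := Submodule.mem_colon.1 (hJxy hr)
    simpa [smul_add] using add_mem (hxy x (by simp)) (hxy y (by simp))
  smul_mem' c x hx := by
    obtain ⟨J, hJ, hJx⟩ := mem_tildeSet.1 hx
    refine mem_tildeSet.2 ⟨J, hJ, fun r hr => ?_⟩
    simpa [smul_comm r c] using A.1.smul_mem c (Submodule.mem_colon_singleton.1 (hJx hr))

theorem tildeSubmodule_le_toFun (A : FractionalIdeal R⁰ (FractionRing R)) :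
    s.tildeSubmodule A ≤ s.toFun A := by
  intro x hx
  obtain ⟨J, hJ, hJx⟩ := mem_tildeSet.1 hx
  rcases eq_or_ne x 0 with rfl | hx0
  · exact Submodule.zero_mem _
  have hJ0 : (J : FractionalIdeal R⁰ (FractionRing R)) ≠ 0 := coeIdeal_ne_zero.2 hJ.ne_bot
  have h := s.star_mono _ _ (mul_ne_zero (spanSingleton_ne_zero_iff.2 hx0) hJ0)
    (spanSingleton_mul_coeIdeal_le_iff.2 hJx)
  rw [s.star_smul x _ hx0 hJ0, hJ.toFun_eq_one, mul_one] at h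
  exact h (mem_spanSingleton_self R⁰ x)

def tilde (A : FractionalIdeal R⁰ (FractionRing R)) : FractionalIdeal R⁰ (FractionRing R) :=
  ⟨s.tildeSubmodule A, isFractional_of_le (s.tildeSubmodule_le_toFun A)⟩

variable {s}

theorem coe_tilde : (s.tilde A : Set (FractionRing R)) = tildeSet R s A := rfl

theorem mem_tilde : x ∈ s.tilde A ↔
    ∃ J, s.IsGVIdeal J ∧ J ≤ (A : Submodule R (FractionRing R)).colon {x} :=
  mem_tildeSet

theorem le_tilde : A ≤ s.tilde A := fun x hx =>
  mem_tilde.2 ⟨⊤, s.isGVIdeal_top, by simpa using hx⟩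

theorem tilde_mono (hAB : A ≤ B) : s.tilde A ≤ s.tilde B := fun x hx => by
  obtain ⟨J, hJ, hJx⟩ := mem_tilde.1 hx
  exact mem_tilde.2 ⟨J, hJ, hJx.trans (Submodule.colon_mono hAB le_rfl)⟩

theorem tilde_spanSingleton (hx : x ≠ 0) :
    s.tilde (spanSingleton R⁰ x) = spanSingleton R⁰ x :=
  le_antisymm ((s.tildeSubmodule_le_toFun _).trans (s.star_principal x hx).le) le_tilde

theorem tilde_spanSingleton_mul {y : FractionRing R} (hy : y ≠ 0) :
    s.tilde (spanSingleton R⁰ y * A) = spanSingleton R⁰ y * s.tilde A := by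
  ext z
  rw [mem_spanSingleton_mul_iff hy, mem_tilde, mem_tilde, colon_spanSingleton_mul hy]

theorem tilde_tilde : s.tilde (s.tilde A) = s.tilde A := by
  refine le_antisymm (fun x hx => ?_) le_tilde
  obtain ⟨J, hJ, hJx⟩ := mem_tilde.1 hx
  obtain ⟨t, rfl⟩ := hJ.fg
  obtain ⟨P, hP, hPt⟩ := exists_isGVIdeal_le_colon_of_finite (S := (· • x) '' (t : Set R))
    (t.finite_toSet.image _) <| by
      rintro _ ⟨i, hi, rfl⟩
      exact mem_tilde.1 (Submodule.mem_colon_singleton.1 (hJx (Ideal.subset_span hi)))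
  refine mem_tilde.2 ⟨_, hJ.mul hP, Submodule.mul_le.2 fun j hj p hp => ?_⟩
  have ht : (t : Set R) ⊆ (A : Submodule R (FractionRing R)).colon {p • x} := fun i hi => by
    rw [SetLike.mem_coe, Submodule.mem_colon_singleton, smul_comm]
    exact Submodule.mem_colon.1 (hPt hp) _ ⟨i, hi, rfl⟩
  simpa [mul_smul] using Ideal.span_le.2 ht hj

theorem tilde_inf : s.tilde (A ⊓ B) = s.tilde A ⊓ s.tilde B := by
  refine le_antisymm (le_inf (tilde_mono inf_le_left) (tilde_mono inf_le_right)) fun x hx => ?_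
  obtain ⟨I, hI, hIx⟩ := mem_tilde.1 (inf_le_left (b := s.tilde B) hx)
  obtain ⟨J, hJ, hJx⟩ := mem_tilde.1 (inf_le_right (a := s.tilde A) hx)
  refine mem_tilde.2 ⟨I * J, hI.mul hJ, ?_⟩
  rw [coe_inf, Submodule.inf_colon]
  exact Ideal.mul_le_inf.trans (inf_le_inf hIx hJx)

theorem coe_tilde_eq_biUnion (hA : A ≠ 0) :
    (s.tilde A : Set (FractionRing R)) =
      ⋃ F ∈ {F : FractionalIdeal R⁰ (FractionRing R) |
          F ≠ 0 ∧ (F : Submodule R (FractionRing R)).FG ∧ F ≤ A},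
        (s.tilde F : Set (FractionRing R)) := by
  refine subset_antisymm (fun x hx => ?_) (Set.iUnion₂_subset fun F hF => tilde_mono hF.2.2)
  rcases eq_or_ne x 0 with rfl | hx0
  · obtain ⟨a, ha, ha0⟩ := Submodule.exists_mem_ne_zero_of_ne_bot
      (coeToSubmodule_eq_bot.not.2 hA)
    refine Set.mem_biUnion (x := spanSingleton R⁰ a) ⟨spanSingleton_ne_zero_iff.2 ha0, ?_,
      spanSingleton_le_iff_mem.2 ha⟩ (FractionalIdeal.zero_mem _)
    simpa using Submodule.fg_span_singleton a
  obtain ⟨J, hJ, hJx⟩ := mem_tilde.1 hx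
  refine Set.mem_biUnion ⟨mul_ne_zero (spanSingleton_ne_zero_iff.2 hx0)
    (coeIdeal_ne_zero.2 hJ.ne_bot), ?_, spanSingleton_mul_coeIdeal_le_iff.2 hJx⟩
    (mem_tilde.2 ⟨J, hJ, spanSingleton_mul_coeIdeal_le_iff.1 le_rfl⟩)
  rw [coe_mul, coe_spanSingleton]
  exact (Submodule.fg_span_singleton x).mul
    ((coeIdeal_fg R⁰ (IsFractionRing.injective R _) J).2 hJ.fg)

def tildeOperation (s : StarOperation R) : StarOperation R where
  toFun := s.tilde
  star_principal _ hx := tilde_spanSingleton hx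
  star_smul _ _ hx _ := tilde_spanSingleton_mul hx
  le_star _ _ := le_tilde
  star_mono _ _ _ := tilde_mono
  star_idem _ _ := tilde_tilde

end StarOperation

/-- **Statement.** For any star operation `*` on `R`, the operation `~*`,
given by `A^{~*} = {x ∈ K | xJ ⊆ A for some nonzero f.g. ideal J with J^* = R}`,
is a star operation on `R` which is stable (`(A ∩ B)^{~*} = A^{~*} ∩ B^{~*}`) and
of finite character (`A^{~*} = ⋃ {F^{~*} : F nonzero f.g. fractional ideal, F ⊆ A}`). -/
theorem tilde_star_is_stable_finite_character (s : StarOperation R) :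
    ∃ ts : StarOperation R,
      (∀ A : FractionalIdeal (nonZeroDivisors R) (FractionRing R), A ≠ 0 →
        (ts.toFun A : Set (FractionRing R)) = tildeSet R s A) ∧
      (∀ A B : FractionalIdeal (nonZeroDivisors R) (FractionRing R), A ≠ 0 → B ≠ 0 →
        ts.toFun (A ⊓ B) = ts.toFun A ⊓ ts.toFun B) ∧
      (∀ A : FractionalIdeal (nonZeroDivisors R) (FractionRing R), A ≠ 0 →
        (ts.toFun A : Set (FractionRing R)) =
          ⋃ F ∈ {F : FractionalIdeal (nonZeroDivisors R) (FractionRing R) |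
              F ≠ 0 ∧ (F : Submodule R (FractionRing R)).FG ∧ F ≤ A},
            (ts.toFun F : Set (FractionRing R))) :=
  ⟨s.tildeOperation, fun _ _ => StarOperation.coe_tilde, fun _ _ _ _ => StarOperation.tilde_inf,
    fun _ hA => StarOperation.coe_tilde_eq_biUnion hA⟩

end
end

section
/- Let T be an integral domain, M a maximal ideal of T, φ : T → k = T/M the canonical surjection, D a proper subring of k, and R = φ^{-1}(D). If P is a prime ideal of D and Q = φ^{-1}(P), then P is a w-prime ideal of D if and only if Q is a w-prime ideal of R; likewise P is w-maximal in D if and only if Q is w-maximal in R. -/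
noncomputable section

variable (R : Type*) [CommRing R] [IsDomain R]

/-- The `w`-closure `I^w = {x ∈ qf(R) | xJ ⊆ I for some f.g. ideal J with J⁻¹ = R}`
of an ideal `I`, as a subset of the fraction field. -/
def wSet (I : Ideal R) : Set (FractionRing R) :=
  {x | ∃ J : Ideal R, J.FG ∧
    (J : FractionalIdeal (nonZeroDivisors R) (FractionRing R))⁻¹ = 1 ∧
    ∀ j ∈ J, x * algebraMap R (FractionRing R) j ∈ algebraMap R (FractionRing R) '' I}

/-- An ideal is a `w`-ideal if `I^w = I`. -/
def IsWIdeal (I : Ideal R) : Prop :=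
  wSet R I = algebraMap R (FractionRing R) '' I

/-- A `w`-prime ideal: a prime ideal which is a `w`-ideal. -/
def IsWPrime (I : Ideal R) : Prop := I.IsPrime ∧ IsWIdeal R I

/-- A `w`-maximal ideal: maximal in the set of `w`-prime ideals. -/
def IsWMaximal (I : Ideal R) : Prop :=
  IsWPrime R I ∧ ∀ J : Ideal R, IsWPrime R J → I ≤ J → I = J

/-- The `w`-dimension: the supremum of the lengths of chains of `w`-prime ideals. -/
def wDim : WithBot ℕ∞ :=
  Order.krullDim {P : Ideal R // IsWPrime R P}

/-- The valuative dimension: sup of the (Krull) dimensions of valuation overrings. -/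
def valDim : WithBot ℕ∞ :=
  ⨆ V : {V : Subalgebra R (FractionRing R) // ValuationRing V}, ringKrullDim V.1

/-- The `w`-closure of a fractional ideal, as a subset of the fraction field. -/
def wFSet (F : FractionalIdeal (nonZeroDivisors R) (FractionRing R)) :
    Set (FractionRing R) :=
  {x | ∃ J : Ideal R, J.FG ∧
    (J : FractionalIdeal (nonZeroDivisors R) (FractionRing R))⁻¹ = 1 ∧
    ∀ j ∈ J, x * algebraMap R (FractionRing R) j ∈ (F : Set (FractionRing R))}

/-- A `w`-valuation overring: a valuation overring `V` of `R` with `F^w ⊆ FV` for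
every nonzero finitely generated fractional ideal `F` of `R`. -/
def IsWValuationOverring (V : Subalgebra R (FractionRing R)) : Prop :=
  ValuationRing V ∧
    ∀ F : FractionalIdeal (nonZeroDivisors R) (FractionRing R), F ≠ 0 →
      (F : Submodule R (FractionRing R)).FG →
      ∀ x ∈ wFSet R F, x ∈ Submodule.span V (F : Set (FractionRing R))

/-- The `w`-valuative dimension: sup of dimensions of `w`-valuation overrings. -/
def wValDim : WithBot ℕ∞ :=
  ⨆ V : {V : Subalgebra R (FractionRing R) // IsWValuationOverring R V}, ringKrullDim V.1

/-- A Jaffard domain: `dim R = dim_v R < ∞`. -/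
def IsJaffard : Prop := ringKrullDim R = valDim R ∧ valDim R ≠ ⊤

/-- A `w`-Jaffard domain: `w-dim R = w-dim_v R < ∞`. -/
def IsWJaffard : Prop := wDim R = wValDim R ∧ wValDim R ≠ ⊤

end

noncomputable section
namespace WAux

set_option linter.unusedSectionVars false

variable {A : Type*} [CommRing A] [IsDomain A]

local notation "ι" => algebraMap A (FractionRing A)

lemma coe_ne_zero {J : Ideal A} (hJ : J ≠ ⊥) :
    (J : FractionalIdeal (nonZeroDivisors A) (FractionRing A)) ≠ 0 :=
  FractionalIdeal.coeIdeal_ne_zero.mpr hJ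

lemma ne_bot_of_inv_one {J : Ideal A}
    (hinv : (J : FractionalIdeal (nonZeroDivisors A) (FractionRing A))⁻¹ = 1) : J ≠ ⊥ := by
  rintro rfl
  rw [FractionalIdeal.coeIdeal_bot, FractionalIdeal.inv_zero'] at hinv
  have h1 : (1 : FractionRing A) ∈ (1 : FractionalIdeal (nonZeroDivisors A) (FractionRing A)) :=
    (FractionalIdeal.mem_one_iff _).mpr ⟨1, map_one _⟩
  rw [← hinv] at h1
  simp only [FractionalIdeal.mem_zero_iff] at h1
  exact one_ne_zero h1

lemma iota_inj : Function.Injective (algebraMap A (FractionRing A)) :=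
  IsFractionRing.injective A (FractionRing A)

lemma iota_ne_zero {b : A} (hb : b ≠ 0) : ι b ≠ 0 := by
  intro h
  exact hb (iota_inj (by rw [h, map_zero]))

/-- Forward direction: divisibility consequence of `J⁻¹ = 1`. -/
lemma gv_forward {J : Ideal A} (hJ : J ≠ ⊥)
    (hinv : (J : FractionalIdeal (nonZeroDivisors A) (FractionRing A))⁻¹ = 1)
    {a b : A} (hb : b ≠ 0) (hdiv : ∀ j ∈ J, b ∣ a * j) : b ∣ a := by
  set x : FractionRing A := ι a / ι b with hx
  have hxmem : x ∈ (J : FractionalIdeal (nonZeroDivisors A) (FractionRing A))⁻¹ := by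
    rw [FractionalIdeal.mem_inv_iff (coe_ne_zero hJ)]
    intro y hy
    obtain ⟨j, hjJ, rfl⟩ := (FractionalIdeal.mem_coeIdeal _).mp hy
    obtain ⟨c, hc⟩ := hdiv j hjJ
    refine (FractionalIdeal.mem_one_iff _).mpr ⟨c, ?_⟩
    have hthis : ι a * ι j = ι b * ι c := by rw [← map_mul, ← map_mul, hc]
    have hbne : ι b ≠ 0 := iota_ne_zero hb
    rw [hx]
    field_simp
    rw [hthis]; ring
  rw [hinv] at hxmem
  obtain ⟨c, hc⟩ := (FractionalIdeal.mem_one_iff _).mp hxmem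
  refine ⟨c, iota_inj ?_⟩
  have hbne : ι b ≠ 0 := iota_ne_zero hb
  rw [map_mul]
  rw [hx, eq_comm, div_eq_iff hbne] at hc
  rw [hc]; ring

/-- Backward direction: the divisibility property implies `J⁻¹ = 1`. -/
lemma gv_backward {J : Ideal A} (hJ : J ≠ ⊥)
    (h : ∀ a b : A, b ≠ 0 → (∀ j ∈ J, b ∣ a * j) → b ∣ a) :
    (J : FractionalIdeal (nonZeroDivisors A) (FractionRing A))⁻¹ = 1 := by
  apply FractionalIdeal.ext
  intro x
  constructor
  · intro hx
    rw [FractionalIdeal.mem_inv_iff (coe_ne_zero hJ)] at hx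
    obtain ⟨a, b, hbmem, hab⟩ := IsFractionRing.div_surjective (A := A) x
    have hb : b ≠ 0 := nonZeroDivisors.ne_zero hbmem
    have hbne : ι b ≠ 0 := iota_ne_zero hb
    have hdiv : ∀ j ∈ J, b ∣ a * j := by
      intro j hj
      have hxj := hx (ι j) ((FractionalIdeal.mem_coeIdeal _).mpr ⟨j, hj, rfl⟩)
      obtain ⟨c, hc⟩ := (FractionalIdeal.mem_one_iff _).mp hxj
      refine ⟨c, iota_inj ?_⟩
      rw [← hab] at hc
      rw [map_mul, map_mul, hc]
      field_simp
    obtain ⟨c, hc⟩ := h a b hb hdiv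
    refine (FractionalIdeal.mem_one_iff _).mpr ⟨c, ?_⟩
    rw [← hab, hc, map_mul, mul_comm, mul_div_assoc, div_self hbne, mul_one]
  · intro hx
    obtain ⟨e, he⟩ := (FractionalIdeal.mem_one_iff _).mp hx
    rw [FractionalIdeal.mem_inv_iff (coe_ne_zero hJ)]
    intro y hy
    obtain ⟨j, hjJ, rfl⟩ := (FractionalIdeal.mem_coeIdeal _).mp hy
    exact (FractionalIdeal.mem_one_iff _).mpr ⟨e * j, by rw [map_mul, he]⟩

/-- For a prime ideal, being a `w`-ideal is equivalent to containing no GV-ideal. -/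
lemma isWPrime_iff {P : Ideal A} (hP : P.IsPrime) :
    IsWPrime A P ↔ ¬ ∃ J : Ideal A, J.FG ∧
      (J : FractionalIdeal (nonZeroDivisors A) (FractionRing A))⁻¹ = 1 ∧ J ≤ P := by
  constructor
  · rintro ⟨-, hw⟩ ⟨J, hfg, hinv, hle⟩
    have h1 : (algebraMap A (FractionRing A) 1) ∈ wSet A P :=
      ⟨J, hfg, hinv, fun j hj => ⟨j, hle hj, by rw [map_one, one_mul]⟩⟩
    rw [hw] at h1
    obtain ⟨p, hp, hpe⟩ := h1
    have hpone : p = 1 := iota_inj hpe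
    exact hP.ne_top ((Ideal.eq_top_iff_one P).mpr (hpone ▸ hp))
  · intro hno
    refine ⟨hP, Set.Subset.antisymm ?_ ?_⟩
    · rintro x ⟨J, hfg, hinv, hmul⟩
      have hJ : J ≠ ⊥ := ne_bot_of_inv_one hinv
      have hxmem : x ∈ (J : FractionalIdeal (nonZeroDivisors A) (FractionRing A))⁻¹ := by
        rw [FractionalIdeal.mem_inv_iff (coe_ne_zero hJ)]
        intro y hy
        obtain ⟨j, hjJ, rfl⟩ := (FractionalIdeal.mem_coeIdeal _).mp hy
        obtain ⟨p, _, hpe⟩ := hmul j hjJ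
        exact (FractionalIdeal.mem_one_iff _).mpr ⟨p, hpe⟩
      rw [hinv] at hxmem
      obtain ⟨r, hr⟩ := (FractionalIdeal.mem_one_iff _).mp hxmem
      have hnle : ¬ J ≤ P := fun hle => hno ⟨J, hfg, hinv, hle⟩
      obtain ⟨j, hjJ, hjP⟩ := SetLike.not_le_iff_exists.mp hnle
      obtain ⟨p, hp, hpe⟩ := hmul j hjJ
      have hrj : r * j = p := iota_inj (by rw [map_mul, hr, hpe])
      have hrP : r ∈ P := by
        rcases hP.mem_or_mem (hrj ▸ hp) with h | h
        · exact h
        · exact absurd h hjP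
      exact ⟨r, hrP, hr⟩
    · rintro x ⟨p, hp, rfl⟩
      refine ⟨⊤, ⟨{1}, by simp⟩, ?_, ?_⟩
      · rw [FractionalIdeal.coeIdeal_top, FractionalIdeal.inv_eq, FractionalIdeal.div_one]
      · intro j _
        exact ⟨p * j, Ideal.mul_mem_right j P hp, by rw [map_mul]⟩

end WAux
end

noncomputable section

variable (T : Type*) [CommRing T] [IsDomain T] (M : Ideal T) [M.IsMaximal]
  (D : Subring (T ⧸ M))

/-- The restriction of the quotient map `T → T/M` to a ring homomorphism
`R = φ⁻¹(D) → D`. -/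
def resHom : ↥(D.comap (Ideal.Quotient.mk M)) →+* ↥D :=
  ((Ideal.Quotient.mk M).domRestrict (D.comap (Ideal.Quotient.mk M))).codRestrict
    D.toSubsemiring (fun x => x.2)

namespace WPull

set_option linter.unusedSectionVars false

variable {T M D}

lemma resHom_coe (x : ↥(D.comap (Ideal.Quotient.mk M))) :
    ((resHom T M D x : ↥D) : T ⧸ M) = Ideal.Quotient.mk M (x : T) := rfl

lemma resHom_surjective : Function.Surjective (resHom T M D) := by
  intro d
  obtain ⟨t, ht⟩ := Ideal.Quotient.mk_surjective (d : T ⧸ M)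
  exact ⟨⟨t, Subring.mem_comap.mpr (by rw [ht]; exact d.2)⟩, Subtype.ext ht⟩

lemma coeT_injective :
    Function.Injective (fun x : ↥(D.comap (Ideal.Quotient.mk M)) => (x : T)) :=
  Subtype.val_injective

lemma coeT_eq {x y : ↥(D.comap (Ideal.Quotient.mk M))} (h : x = y) : (x : T) = (y : T) :=
  congrArg Subtype.val h

/-- Lifting a GV-ideal of `D` contained in `P` to a GV-ideal of `R` contained in
`Q = comap π P`. -/
lemma gv_lift {P J' : Ideal ↥D} (hfg : J'.FG)
    (hinv : (J' : FractionalIdeal (nonZeroDivisors ↥D) (FractionRing ↥D))⁻¹ = 1)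
    (hle : J' ≤ P) :
    ∃ K : Ideal ↥(D.comap (Ideal.Quotient.mk M)), K.FG ∧
      (K : FractionalIdeal (nonZeroDivisors ↥(D.comap (Ideal.Quotient.mk M)))
        (FractionRing ↥(D.comap (Ideal.Quotient.mk M))))⁻¹ = 1 ∧
      K ≤ P.comap (resHom T M D) := by
  classical
  obtain ⟨S, hS⟩ := hfg
  have hJ'bot : J' ≠ ⊥ := WAux.ne_bot_of_inv_one hinv
  have hex : ∃ d ∈ S, d ≠ (0 : ↥D) := by
    by_contra h
    push_neg at h
    apply hJ'bot
    rw [← hS, eq_bot_iff, Ideal.span_le]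
    intro x hx
    rw [SetLike.mem_coe, Submodule.mem_bot]
    exact h x hx
  obtain ⟨dl, hdlS, hdl0⟩ := hex
  have hdlJ' : dl ∈ J' := hS ▸ Ideal.subset_span hdlS
  set lift : ↥D → ↥(D.comap (Ideal.Quotient.mk M)) :=
    Function.surjInv WPull.resHom_surjective with hliftdef
  have hlift : ∀ d, resHom T M D (lift d) = d :=
    fun d => Function.surjInv_eq WPull.resHom_surjective d
  have hmkl : ∀ d : ↥D, Ideal.Quotient.mk M ((lift d : T)) = (d : T ⧸ M) := by
    intro d
    rw [← resHom_coe (lift d), hlift d]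
  have hrl : ((lift dl : T) ∉ M) := by
    intro hmem
    have h0 : Ideal.Quotient.mk M (lift dl : T) = 0 := Ideal.Quotient.eq_zero_iff_mem.mpr hmem
    rw [hmkl dl] at h0
    exact hdl0 (by exact_mod_cast h0)
  obtain ⟨y, m, hmM, hym⟩ := (inferInstance : M.IsMaximal).exists_inv hrl
  have hmmem : m ∈ D.comap (Ideal.Quotient.mk M) := by
    rw [Subring.mem_comap, Ideal.Quotient.eq_zero_iff_mem.mpr hmM]
    exact D.zero_mem
  set mhat : ↥(D.comap (Ideal.Quotient.mk M)) := ⟨m, hmmem⟩ with hmhat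
  set K : Ideal ↥(D.comap (Ideal.Quotient.mk M)) :=
    Ideal.span ↑(insert mhat (S.image lift)) with hK
  have hmhatK : mhat ∈ K := Ideal.subset_span (by simp)
  have hliftK : ∀ d ∈ S, lift d ∈ K := by
    intro d hd
    have hmem : lift d ∈ (insert mhat (S.image lift) : Finset _) :=
      Finset.mem_insert_of_mem (Finset.mem_image_of_mem lift hd)
    exact Ideal.subset_span (Finset.mem_coe.mpr hmem)
  have hliftdl0 : lift dl ≠ 0 := by
    intro h0
    apply hdl0
    rw [← hlift dl, h0, map_zero]
  have hKbot : K ≠ ⊥ := by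
    rw [Submodule.ne_bot_iff]
    exact ⟨lift dl, hliftK dl hdlS, hliftdl0⟩
  refine ⟨K, ⟨insert mhat (S.image lift), rfl⟩, ?_, ?_⟩
  · -- GV property
    apply WAux.gv_backward hKbot
    intro a b hb hdiv
    have hbT : (b : T) ≠ 0 := fun h0 => hb (by exact_mod_cast h0)
    obtain ⟨cl, hcl⟩ := hdiv (lift dl) (hliftK dl hdlS)
    obtain ⟨cm, hcm⟩ := hdiv mhat hmhatK
    have hclT : (a : T) * (lift dl : T) = (b : T) * (cl : T) := by
      have := WPull.coeT_eq hcl; push_cast at this; exact this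
    have hcmT : (a : T) * m = (b : T) * (cm : T) := by
      have := WPull.coeT_eq hcm; push_cast at this; exact this
    set tstar : T := y * (cl : T) + (cm : T) with htstar
    have hA : (a : T) = (b : T) * tstar := by
      rw [htstar]
      linear_combination (-(a : T)) * hym + y * hclT + hcmT
    -- residues
    set c : T ⧸ M := Ideal.Quotient.mk M tstar with hc
    have hgen : ∀ d ∈ S, ∃ e : ↥D, c * ((d : ↥D) : T ⧸ M) = (e : T ⧸ M) := by
      intro d hd
      obtain ⟨cd, hcd⟩ := hdiv (lift d) (hliftK d hd)
      have hcdT : (a : T) * (lift d : T) = (b : T) * (cd : T) := by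
        have := WPull.coeT_eq hcd; push_cast at this; exact this
      rw [hA] at hcdT
      have hT : tstar * (lift d : T) = (cd : T) :=
        mul_left_cancel₀ hbT (by linear_combination hcdT)
      refine ⟨resHom T M D cd, ?_⟩
      have := congrArg (Ideal.Quotient.mk M) hT
      rw [map_mul, hmkl d] at this
      rw [← hc] at this
      rw [this, resHom_coe]
    have hall : ∀ j' ∈ J', ∃ e : ↥D, c * ((j' : ↥D) : T ⧸ M) = (e : T ⧸ M) := by
      intro j' hj'
      rw [← hS] at hj'
      induction hj' using Submodule.span_induction with
      | mem x hx => exact hgen x hx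
      | zero => exact ⟨0, by push_cast; ring⟩
      | add x z hx hz ihx ihz =>
        obtain ⟨e1, he1⟩ := ihx
        obtain ⟨e2, he2⟩ := ihz
        exact ⟨e1 + e2, by push_cast; rw [mul_add, he1, he2]⟩
      | smul f x hx ihx =>
        obtain ⟨e, he⟩ := ihx
        refine ⟨f * e, ?_⟩
        rw [smul_eq_mul]
        push_cast
        rw [← mul_assoc, mul_comm c ((f : ↥D) : T ⧸ M), mul_assoc, he]
    obtain ⟨el, hel⟩ := hall dl hdlJ'
    have hdlT : ((dl : ↥D) : T ⧸ M) ≠ 0 := fun h0 => hdl0 (by exact_mod_cast h0)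
    have hdve : dl ∣ el := by
      apply WAux.gv_forward hJ'bot hinv hdl0
      intro j' hj'
      obtain ⟨ej, hej⟩ := hall j' hj'
      refine ⟨ej, ?_⟩
      apply Subtype.val_injective
      push_cast
      linear_combination (-((j' : ↥D) : T ⧸ M)) * hel + ((dl : ↥D) : T ⧸ M) * hej
    obtain ⟨estar, hestar⟩ := hdve
    have hcval : c = ((estar : ↥D) : T ⧸ M) := by
      apply mul_right_cancel₀ hdlT
      rw [hel, hestar]
      push_cast
      ring
    have htstarmem : tstar ∈ D.comap (Ideal.Quotient.mk M) := by
      rw [Subring.mem_comap, ← hc, hcval]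
      exact estar.2
    refine ⟨⟨tstar, htstarmem⟩, ?_⟩
    apply Subtype.val_injective
    push_cast
    exact hA
  · -- K ≤ comap π P
    rw [hK, Ideal.span_le]
    intro x hx
    simp only [Finset.coe_insert, Set.mem_insert_iff, Finset.coe_image, Set.mem_image,
      Finset.mem_coe] at hx
    rw [SetLike.mem_coe, Ideal.mem_comap]
    rcases hx with rfl | ⟨d, hd, rfl⟩
    · have : resHom T M D mhat = 0 := by
        apply Subtype.val_injective
        rw [resHom_coe]
        exact Ideal.Quotient.eq_zero_iff_mem.mpr hmM
      rw [this]
      exact P.zero_mem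
    · rw [hlift d]
      exact hle (hS ▸ Ideal.subset_span hd)

/-- Pushing a GV-ideal of `R` forward to a GV-ideal of `D`. -/
lemma gv_push (hD : D ≠ ⊤) {K : Ideal ↥(D.comap (Ideal.Quotient.mk M))} (hfg : K.FG)
    (hinv : (K : FractionalIdeal (nonZeroDivisors ↥(D.comap (Ideal.Quotient.mk M)))
        (FractionRing ↥(D.comap (Ideal.Quotient.mk M))))⁻¹ = 1) :
    (K.map (resHom T M D)).FG ∧
      ((K.map (resHom T M D) : Ideal ↥D) :
        FractionalIdeal (nonZeroDivisors ↥D) (FractionRing ↥D))⁻¹ = 1 := by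
  have hKbot : K ≠ ⊥ := WAux.ne_bot_of_inv_one hinv
  -- Step A : some element of K has nonzero image
  have hstepA : ∃ κ ∈ K, resHom T M D κ ≠ 0 := by
    by_contra h
    push_neg at h
    have hU : ∃ u : T ⧸ M, u ∉ D := by
      by_contra h2
      push_neg at h2
      exact hD ((Subring.eq_top_iff' D).mpr h2)
    obtain ⟨u, hu⟩ := hU
    obtain ⟨t, ht⟩ := Ideal.Quotient.mk_surjective u
    obtain ⟨κ0, hκ0K, hκ00⟩ := Submodule.ne_bot_iff K |>.mp hKbot
    have hκ0T : (κ0 : T) ≠ 0 := fun h0 => hκ00 (by exact_mod_cast h0)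
    have hmk0 : ∀ κ, κ ∈ K → Ideal.Quotient.mk M (κ : T) = 0 := by
      intro κ hκ
      rw [← resHom_coe κ, h κ hκ]
      rfl
    have hamem : ∀ κ, κ ∈ K → t * (κ : T) ∈ D.comap (Ideal.Quotient.mk M) := by
      intro κ hκ
      rw [Subring.mem_comap, map_mul, hmk0 κ hκ, mul_zero]
      exact D.zero_mem
    set a : ↥(D.comap (Ideal.Quotient.mk M)) := ⟨t * (κ0 : T), hamem κ0 hκ0K⟩ with ha
    have hdiv : ∀ κ ∈ K, κ0 ∣ a * κ := by
      intro κ hκ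
      refine ⟨⟨t * (κ : T), hamem κ hκ⟩, ?_⟩
      apply Subtype.val_injective
      push_cast
      ring
    obtain ⟨s, hs⟩ := WAux.gv_forward hKbot hinv hκ00 hdiv
    have hsT := WPull.coeT_eq hs
    push_cast at hsT
    have hts : t = (s : T) := by
      apply mul_right_cancel₀ hκ0T
      linear_combination hsT
    apply hu
    rw [← ht, hts, ← resHom_coe s]
    exact (resHom T M D s).2
  obtain ⟨κs, hκsK, hκs0⟩ := hstepA
  have hκsT : (κs : T) ≠ 0 := by
    intro h0
    apply hκs0
    apply Subtype.val_injective
    rw [resHom_coe, h0, map_zero]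
    rfl
  have hJ'bot : K.map (resHom T M D) ≠ ⊥ := by
    rw [Submodule.ne_bot_iff]
    exact ⟨resHom T M D κs, Ideal.mem_map_of_mem _ hκsK, hκs0⟩
  refine ⟨hfg.map _, ?_⟩
  apply WAux.gv_backward hJ'bot
  intro α β hβ hdiv
  -- an inverse of β in T ⧸ M
  have hβk : ((β : ↥D) : T ⧸ M) ≠ 0 := fun h0 => hβ (by exact_mod_cast h0)
  obtain ⟨b', hb'⟩ := Ideal.Quotient.mk_surjective ((β : ↥D) : T ⧸ M)
  have hb'M : b' ∉ M := fun hmem => hβk (by rw [← hb']; exact Ideal.Quotient.eq_zero_iff_mem.mpr hmem)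
  obtain ⟨yb, ib, hibM, hyb⟩ := (inferInstance : M.IsMaximal).exists_inv hb'M
  set v : T ⧸ M := Ideal.Quotient.mk M yb with hv
  have hvβ : v * ((β : ↥D) : T ⧸ M) = 1 := by
    have h1 : Ideal.Quotient.mk M (yb * b' + ib) = 1 := by rw [hyb]; exact map_one _
    rw [map_add, map_mul, Ideal.Quotient.eq_zero_iff_mem.mpr hibM, add_zero] at h1
    rw [hv, ← hb']
    exact h1
  set c : T ⧸ M := v * ((α : ↥D) : T ⧸ M) with hc
  have hgen : ∀ j' ∈ K.map (resHom T M D), ∃ e : ↥D, c * ((j' : ↥D) : T ⧸ M) = (e : T ⧸ M) := by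
    intro j' hj'
    obtain ⟨e, he⟩ := hdiv j' hj'
    refine ⟨e, ?_⟩
    have hek : ((α : ↥D) : T ⧸ M) * ((j' : ↥D) : T ⧸ M) = ((β : ↥D) : T ⧸ M) * ((e : ↥D) : T ⧸ M) := by
      have := congrArg (fun z : ↥D => (z : T ⧸ M)) he
      push_cast at this
      exact this
    calc c * ((j' : ↥D) : T ⧸ M) = v * (((α : ↥D) : T ⧸ M) * ((j' : ↥D) : T ⧸ M)) := by rw [hc]; ring
    _ = (v * ((β : ↥D) : T ⧸ M)) * ((e : ↥D) : T ⧸ M) := by rw [hek]; ring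
    _ = ((e : ↥D) : T ⧸ M) := by rw [hvβ, one_mul]
  obtain ⟨t, ht⟩ := Ideal.Quotient.mk_surjective c
  have hamem : ∀ κ : ↥(D.comap (Ideal.Quotient.mk M)), κ ∈ K →
      t * (κ : T) ∈ D.comap (Ideal.Quotient.mk M) := by
    intro κ hκ
    obtain ⟨e, he⟩ := hgen (resHom T M D κ) (Ideal.mem_map_of_mem _ hκ)
    rw [Subring.mem_comap, map_mul, ht, resHom_coe κ] at *
    rw [he]
    exact e.2
  set a : ↥(D.comap (Ideal.Quotient.mk M)) := ⟨t * (κs : T), hamem κs hκsK⟩ with ha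
  have hdivK : ∀ κ ∈ K, κs ∣ a * κ := by
    intro κ hκ
    refine ⟨⟨t * (κ : T), hamem κ hκ⟩, ?_⟩
    apply Subtype.val_injective
    push_cast
    ring
  obtain ⟨s, hs⟩ := WAux.gv_forward hKbot hinv (fun h0 => hκsT (by exact_mod_cast h0)) hdivK
  have hsT := WPull.coeT_eq hs
  push_cast at hsT
  have hts : t = (s : T) := by
    apply mul_right_cancel₀ hκsT
    linear_combination hsT
  have hcD : c = ((resHom T M D s : ↥D) : T ⧸ M) := by
    rw [← ht, hts, resHom_coe]
  refine ⟨resHom T M D s, ?_⟩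
  apply Subtype.val_injective
  have : ((α : ↥D) : T ⧸ M) = ((β : ↥D) : T ⧸ M) * ((resHom T M D s : ↥D) : T ⧸ M) := by
    rw [← hcD, hc]
    calc ((α : ↥D) : T ⧸ M) = (v * ((β : ↥D) : T ⧸ M)) * ((α : ↥D) : T ⧸ M) := by rw [hvβ, one_mul]
    _ = ((β : ↥D) : T ⧸ M) * (v * ((α : ↥D) : T ⧸ M)) := by ring
  push_cast
  exact this

/-- The `w`-prime transfer for an arbitrary prime of `D`. -/
lemma key (hD : D ≠ ⊤) (P' : Ideal ↥D) (hP' : P'.IsPrime) :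
    IsWPrime ↥D P' ↔
      IsWPrime ↥(D.comap (Ideal.Quotient.mk M)) (P'.comap (resHom T M D)) := by
  haveI := hP'
  have hQ' : (P'.comap (resHom T M D)).IsPrime := Ideal.IsPrime.comap _
  rw [WAux.isWPrime_iff hP', WAux.isWPrime_iff hQ']
  constructor
  · rintro hno ⟨K, hfg, hinv, hle⟩
    obtain ⟨hfg2, hinv2⟩ := gv_push hD hfg hinv
    exact hno ⟨K.map (resHom T M D), hfg2, hinv2, Ideal.map_le_iff_le_comap.mpr hle⟩
  · rintro hno ⟨J', hfg, hinv, hle⟩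
    obtain ⟨K, hfg2, hinv2, hle2⟩ := gv_lift hfg hinv hle
    exact hno ⟨K, hfg2, hinv2, hle2⟩

end WPull

/-- **Statement.** In a pullback `R = φ⁻¹(D)` of type `(□)` (with `φ : T → k = T/M`,
`D ⊊ k`), if `P` is a prime ideal of `D` and `Q = φ⁻¹(P)`, then `P` is `w`-prime in
`D` iff `Q` is `w`-prime in `R`, and `P` is `w`-maximal in `D` iff `Q` is
`w`-maximal in `R`. -/
theorem wPrime_wMaximal_pullback (hD : D ≠ ⊤) (P : Ideal ↥D) (hP : P.IsPrime) :
    (IsWPrime ↥D P ↔ IsWPrime ↥(D.comap (Ideal.Quotient.mk M)) (P.comap (resHom T M D))) ∧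
    (IsWMaximal ↥D P ↔ IsWMaximal ↥(D.comap (Ideal.Quotient.mk M)) (P.comap (resHom T M D))) := by
  have hsurj : Function.Surjective (resHom T M D) := WPull.resHom_surjective
  refine ⟨WPull.key hD P hP, ?_, ?_⟩
  · rintro ⟨hwP, hmax⟩
    refine ⟨(WPull.key hD P hP).mp hwP, ?_⟩
    intro Q' hwQ' hle
    have hker : RingHom.ker (resHom T M D) ≤ Q' := by
      refine le_trans ?_ hle
      intro x hx
      rw [RingHom.mem_ker] at hx
      rw [Ideal.mem_comap, hx]
      exact P.zero_mem
    haveI := hwQ'.1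
    have hP2 : (Q'.map (resHom T M D)).IsPrime := Ideal.map_isPrime_of_surjective hsurj hker
    have hcm : (Q'.map (resHom T M D)).comap (resHom T M D) = Q' := by
      rw [Ideal.comap_map_of_surjective _ hsurj]
      refine sup_eq_left.mpr ?_
      intro x hx
      rw [Ideal.mem_comap, Ideal.mem_bot] at hx
      exact hker (RingHom.mem_ker.mpr hx)
    have hwP2 : IsWPrime ↥D (Q'.map (resHom T M D)) := by
      rw [WPull.key hD _ hP2, hcm]
      exact hwQ'
    have hPle : P ≤ Q'.map (resHom T M D) := by
      have h1 : P = (P.comap (resHom T M D)).map (resHom T M D) :=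
        (Ideal.map_comap_of_surjective _ hsurj P).symm
      rw [h1]
      exact Ideal.map_mono hle
    have hPeq := hmax _ hwP2 hPle
    rw [hPeq]
    exact hcm
  · rintro ⟨hwQ, hmax⟩
    refine ⟨(WPull.key hD P hP).mpr hwQ, ?_⟩
    intro P' hwP' hle
    have hwQ' := (WPull.key hD P' hwP'.1).mp hwP'
    have heq := hmax _ hwQ' (Ideal.comap_mono hle)
    have h2 := congrArg (Ideal.map (resHom T M D)) heq
    rw [Ideal.map_comap_of_surjective _ hsurj, Ideal.map_comap_of_surjective _ hsurj] at h2
    exact h2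

end
end

section
/- Let V₁ = K(W,X,Z) + M₁ with M₁ = Y·K(W,X,Z)[Y]_{(Y)} (a rank-1 discrete valuation domain of L = K(W,X,Y,Z)), and let V₂ = K(W) + M₂ be the rank-3 valuation domain of L obtained by successive pullbacks through K(W,X,Y)+Z·K(W,X,Y)[Z]_{(Z)} and K(W,X)[Y]_{(Y+1)} and K(W)[X]_{(X)}. Then V₁ and V₂ are incomparable valuation domains of L (neither contains the other). -/
noncomputable section

variable (K : Type*) [Field K]

/-- The field `L = K(W,X,Y,Z)`, realized as the fraction field of `K[W,X,Y,Z]`. -/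
abbrev LL := FractionRing (MvPolynomial (Fin 4) K)

/-- The image of the indeterminate `W` in `L`. -/
def vW : LL K := algebraMap (MvPolynomial (Fin 4) K) (LL K) (MvPolynomial.X 0)
/-- The image of the indeterminate `X` in `L`. -/
def vX : LL K := algebraMap (MvPolynomial (Fin 4) K) (LL K) (MvPolynomial.X 1)
/-- The image of the indeterminate `Y` in `L`. -/
def vY : LL K := algebraMap (MvPolynomial (Fin 4) K) (LL K) (MvPolynomial.X 2)
/-- The image of the indeterminate `Z` in `L`. -/
def vZ : LL K := algebraMap (MvPolynomial (Fin 4) K) (LL K) (MvPolynomial.X 3)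

/-- The subring `F[u]` of `L` generated by a subset `F` together with `u`. -/
def polyRing (F : Set (LL K)) (u : LL K) : Subring (LL K) :=
  Subring.closure (F ∪ {u})

/-- The localization `F[u]_{(u)}` of `F[u]` at the prime `(u)`, as a subset of `L`:
elements `p/q` with `p, q ∈ F[u]` and `q ∉ (u)`. -/
def locSet (F : Set (LL K)) (u : LL K) : Set (LL K) :=
  {a | ∃ p ∈ polyRing K F u, ∃ q ∈ polyRing K F u,
    (¬ ∃ b ∈ polyRing K F u, q = u * b) ∧ a * q = p}

/-- The maximal ideal `u·F[u]_{(u)}` of `F[u]_{(u)}`, as a subset of `L`. -/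
def maxSet (F : Set (LL K)) (u : LL K) : Set (LL K) :=
  {a | ∃ p ∈ polyRing K F u, ∃ q ∈ polyRing K F u,
    (¬ ∃ b ∈ polyRing K F u, q = u * b) ∧ (∃ b ∈ polyRing K F u, p = u * b) ∧ a * q = p}

/-- The subfield `K(W,X,Z)` of `L`. -/
def Fwxz : Set (LL K) := (IntermediateField.adjoin K {vW K, vX K, vZ K} : IntermediateField K (LL K))
/-- The subfield `K(W,X,Y)` of `L`. -/
def Fwxy : Set (LL K) := (IntermediateField.adjoin K {vW K, vX K, vY K} : IntermediateField K (LL K))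
/-- The subfield `K(W,X)` of `L`. -/
def Fwx : Set (LL K) := (IntermediateField.adjoin K {vW K, vX K} : IntermediateField K (LL K))
/-- The subfield `K(W)` of `L`. -/
def Fw : Set (LL K) := (IntermediateField.adjoin K {vW K} : IntermediateField K (LL K))

/-- The rank-one discrete valuation domain `V₁ = K(W,X,Z) + M₁ = K(W,X,Z)[Y]_{(Y)}`
of `L`, with `M₁ = Y·K(W,X,Z)[Y]_{(Y)}`. -/
def V₁ : Set (LL K) := locSet K (Fwxz K) (vY K)

/-- The valuation domain `V = K(W,X,Y) + M = K(W,X,Y)[Z]_{(Z)}` of `L`,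
with `M = Z·K(W,X,Y)[Z]_{(Z)}`. -/
def Vdom : Set (LL K) := locSet K (Fwxy K) (vZ K)
/-- The maximal ideal `M = Z·K(W,X,Y)[Z]_{(Z)}` of `V`. -/
def Mdom : Set (LL K) := maxSet K (Fwxy K) (vZ K)

/-- `K(W,X)[Y]_{(Y+1)}`, a valuation domain of `K(W,X,Y)`. -/
def W₁ : Set (LL K) := locSet K (Fwx K) (vY K + 1)
/-- The maximal ideal `(Y+1)·K(W,X)[Y]_{(Y+1)}`. -/
def MW₁ : Set (LL K) := maxSet K (Fwx K) (vY K + 1)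

/-- `K(W)[X]_{(X)}`, a valuation domain of `K(W,X)`. -/
def U₀ : Set (LL K) := locSet K (Fw K) (vX K)

/-- The rank-three valuation domain `V₂ = K(W) + M₂` of `L`, obtained by successive
pullbacks: `V₂ = ψ⁻¹(K(W)[X]_{(X)})` where `V' = τ⁻¹(K(W,X)[Y]_{(Y+1)})`,
`τ : V → K(W,X,Y)` is the residue map of `V = K(W,X,Y) + Z·K(W,X,Y)[Z]_{(Z)}`
(so `τ(a)` is the unique `t ∈ K(W,X,Y)` with `a - t ∈ M`), and `ψ : V' → K(W,X)`
is the residue map of `V'` (with `ψ(a)` the unique `s ∈ K(W,X)` with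
`τ(a) - s ∈ (Y+1)·K(W,X)[Y]_{(Y+1)}`). -/
def V₂ : Set (LL K) :=
  {a | a ∈ Vdom K ∧ ∃ t ∈ Fwxy K, a - t ∈ Mdom K ∧ t ∈ W₁ K ∧
        ∃ s ∈ Fwx K, t - s ∈ MW₁ K ∧ s ∈ U₀ K}

/-!
`Z⁻¹` separates `V₁` from `V₂`: it is a unit of the coefficient field `K(W,X,Z)` of `V₁`,
but `V₂ ⊆ V = K(W,X,Y)[Z]_{(Z)}`, which does not contain `Z⁻¹`. Symmetrically `Y⁻¹ ∉ V₁`,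
while `Y⁻¹ ∈ V₂`: its residue in `K(W,X,Y)` is `Y⁻¹ ∈ K(W,X)[Y]_{(Y+1)}`, whose residue is
`-1 ∈ K(W)[X]_{(X)}`, since `Y⁻¹ + 1 = (Y+1)/Y`. The memberships need the denominators to
lie outside `(u)` in `F[u]`, which holds because each `u` is transcendental over its `F`.
-/

theorem Transcendental.ne_zero {F A : Type*} [Field F] [Ring A] [Algebra F A] {u : A}
    (htr : Transcendental F u) : u ≠ 0 :=
  fun h ↦ htr (h ▸ isAlgebraic_zero)

theorem Transcendental.sub_one_ne_zero {F A : Type*} [Field F] [Ring A] [Algebra F A] {u : A}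
    (htr : Transcendental F u) : u - 1 ≠ 0 :=
  fun h ↦ htr (sub_eq_zero.mp h ▸ isAlgebraic_one)

theorem Transcendental.add_one {F A : Type*} [Field F] [Ring A] [Algebra F A] {u : A}
    (htr : Transcendental F u) : Transcendental F (u + 1) := by
  have h := htr.aeval (Polynomial.X + Polynomial.C 1)
    (by rw [Polynomial.natDegree_X_add_C]; exact one_ne_zero)
    (by rw [Polynomial.leadingCoeff_X_add_C]; exact Submonoid.one_mem _)
  rwa [map_add, Polynomial.aeval_X, Polynomial.aeval_C, map_one] at h

theorem AlgebraicIndependent.transcendental_intermediateField_adjoin {ι F E : Type*} [Field F]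
    [Field E] [Algebra F E] {x : ι → E} (hx : AlgebraicIndependent F x) {s : Set ι} {i : ι}
    (hi : i ∉ s) : Transcendental (IntermediateField.adjoin F (x '' s)) (x i) :=
  IntermediateField.transcendental_adjoin_iff.mpr (hx.transcendental_adjoin hi)

section LocSet

variable {K} {F : IntermediateField K (LL K)} {u : LL K}

open Polynomial

theorem mem_polyRing_self {S : Set (LL K)} : u ∈ polyRing K S u :=
  Subring.subset_closure (Or.inr rfl)

theorem sub_one_mem_polyRing {S : Set (LL K)} : u - 1 ∈ polyRing K S u :=
  Subring.sub_mem _ mem_polyRing_self (Subring.one_mem _)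

theorem exists_aeval_eq_of_mem_polyRing {b : LL K} (hb : b ∈ polyRing K F u) :
    ∃ P : F[X], aeval u P = b := by
  have hle : polyRing K F u ≤ (Algebra.adjoin F {u}).toSubring := by
    refine Subring.closure_le.2 ?_
    rintro y (hy | hy)
    · exact Subalgebra.algebraMap_mem (Algebra.adjoin F {u}) (⟨y, hy⟩ : F)
    · exact hy ▸ Algebra.self_mem_adjoin_singleton F u
  have hb' : b ∈ Algebra.adjoin F {u} := hle hb
  rwa [Algebra.adjoin_singleton_eq_range_aeval] at hb'

/-- `F[u]` is a polynomial ring over `F`, so membership in `(u)` is read off the constant term. -/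
theorem not_exists_aeval_eq_mul (htr : Transcendental F u) {P : F[X]} (hP : P.coeff 0 ≠ 0) :
    ¬ ∃ b ∈ polyRing K F u, aeval u P = u * b := by
  rintro ⟨b, hb, hPb⟩
  obtain ⟨Q, rfl⟩ := exists_aeval_eq_of_mem_polyRing hb
  have hPQ : P = X * Q := transcendental_iff_injective.mp htr (by simpa using hPb)
  exact hP (by rw [hPQ, coeff_X_mul_zero])

theorem not_exists_one_eq_mul (htr : Transcendental F u) :
    ¬ ∃ b ∈ polyRing K F u, (1 : LL K) = u * b := by
  simpa using not_exists_aeval_eq_mul htr (P := 1) (by simp)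

theorem not_exists_sub_one_eq_mul (htr : Transcendental F u) :
    ¬ ∃ b ∈ polyRing K F u, u - 1 = u * b := by
  have h := not_exists_aeval_eq_mul htr (P := X - 1) (by simp)
  rwa [map_sub, aeval_X, map_one] at h

theorem subset_locSet (htr : Transcendental F u) : (F : Set (LL K)) ⊆ locSet K F u :=
  fun a ha ↦ ⟨a, Subring.subset_closure (Or.inl ha), 1, Subring.one_mem _,
    not_exists_one_eq_mul htr, mul_one a⟩

theorem zero_mem_maxSet (htr : Transcendental F u) : 0 ∈ maxSet K F u :=
  ⟨0, Subring.zero_mem _, 1, Subring.one_mem _, not_exists_one_eq_mul htr,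
    ⟨0, Subring.zero_mem _, (mul_zero u).symm⟩, zero_mul 1⟩

theorem inv_sub_one_mem_locSet (htr : Transcendental F u) : (u - 1)⁻¹ ∈ locSet K F u :=
  ⟨1, Subring.one_mem _, u - 1, sub_one_mem_polyRing, not_exists_sub_one_eq_mul htr,
    inv_mul_cancel₀ htr.sub_one_ne_zero⟩

theorem inv_sub_one_add_one_mem_maxSet (htr : Transcendental F u) :
    (u - 1)⁻¹ + 1 ∈ maxSet K F u := by
  refine ⟨u, mem_polyRing_self, u - 1, sub_one_mem_polyRing, not_exists_sub_one_eq_mul htr,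
    ⟨1, Subring.one_mem _, (mul_one u).symm⟩, ?_⟩
  rw [add_mul, inv_mul_cancel₀ htr.sub_one_ne_zero, one_mul, add_sub_cancel]

theorem inv_notMem_locSet {S : Set (LL K)} (hu : u ≠ 0) : u⁻¹ ∉ locSet K S u := by
  rintro ⟨p, hp, q, -, hq, hpq⟩
  exact hq ⟨p, hp, by rw [← hpq, ← mul_assoc, mul_inv_cancel₀ hu, one_mul]⟩

end LocSet

theorem algebraicIndependent_vars : AlgebraicIndependent K
    fun i : Fin 4 ↦ algebraMap (MvPolynomial (Fin 4) K) (LL K) (MvPolynomial.X i) :=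
  (MvPolynomial.algebraicIndependent_X (Fin 4) K).map'
    (f := IsScalarTower.toAlgHom K (MvPolynomial (Fin 4) K) (LL K))
    (IsFractionRing.injective _ _)

theorem transcendental_vY_adjoin_vW_vX_vZ :
    Transcendental (IntermediateField.adjoin K {vW K, vX K, vZ K}) (vY K) := by
  have := (algebraicIndependent_vars K).transcendental_intermediateField_adjoin
    (s := ({0, 1, 3} : Set (Fin 4))) (i := 2) (by simp)
  rw [Set.image_insert_eq, Set.image_insert_eq, Set.image_singleton] at this
  exact this

theorem transcendental_vZ_adjoin_vW_vX_vY :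
    Transcendental (IntermediateField.adjoin K {vW K, vX K, vY K}) (vZ K) := by
  have := (algebraicIndependent_vars K).transcendental_intermediateField_adjoin
    (s := ({0, 1, 2} : Set (Fin 4))) (i := 3) (by simp)
  rw [Set.image_insert_eq, Set.image_insert_eq, Set.image_singleton] at this
  exact this

theorem transcendental_vY_adjoin_vW_vX :
    Transcendental (IntermediateField.adjoin K {vW K, vX K}) (vY K) := by
  have := (algebraicIndependent_vars K).transcendental_intermediateField_adjoin
    (s := ({0, 1} : Set (Fin 4))) (i := 2) (by simp)
  rw [Set.image_insert_eq, Set.image_singleton] at this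
  exact this

theorem transcendental_vX_adjoin_vW :
    Transcendental (IntermediateField.adjoin K {vW K}) (vX K) := by
  have := (algebraicIndependent_vars K).transcendental_intermediateField_adjoin
    (s := ({0} : Set (Fin 4))) (i := 1) (by simp)
  rw [Set.image_singleton] at this
  exact this

theorem inv_vZ_mem_V₁ : (vZ K)⁻¹ ∈ V₁ K :=
  subset_locSet (transcendental_vY_adjoin_vW_vX_vZ K)
    (inv_mem (IntermediateField.subset_adjoin K _ (by simp)))

theorem inv_vY_mem_V₂ : (vY K)⁻¹ ∈ V₂ K := by
  have hZ := transcendental_vZ_adjoin_vW_vX_vY K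
  have hY1 := (transcendental_vY_adjoin_vW_vX K).add_one
  have hYinv : (vY K)⁻¹ ∈ Fwxy K := inv_mem (IntermediateField.subset_adjoin K _ (by simp))
  refine ⟨subset_locSet hZ hYinv, (vY K)⁻¹, hYinv, ?_, ?_, -1, neg_mem (one_mem _), ?_,
    subset_locSet (transcendental_vX_adjoin_vW K) (neg_mem (one_mem _))⟩
  · rw [sub_self]
    exact zero_mem_maxSet hZ
  · have h := inv_sub_one_mem_locSet hY1
    rwa [add_sub_cancel_right] at h
  · have h := inv_sub_one_add_one_mem_maxSet hY1
    rw [add_sub_cancel_right] at h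
    rwa [sub_neg_eq_add]

/-- **Statement.** The valuation domains `V₁` and `V₂` of `L = K(W,X,Y,Z)` are
incomparable: neither contains the other. -/
theorem V₁_V₂_incomparable : ¬ V₁ K ⊆ V₂ K ∧ ¬ V₂ K ⊆ V₁ K :=
  ⟨fun h ↦ inv_notMem_locSet (transcendental_vZ_adjoin_vW_vX_vY K).ne_zero
      (h (inv_vZ_mem_V₁ K)).1,
    fun h ↦ inv_notMem_locSet (transcendental_vY_adjoin_vW_vX_vZ K).ne_zero
      (h (inv_vY_mem_V₂ K))⟩

end
end
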